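/- Let q be a prime power, n and m positive integers, and μ an integer with 1 ≤ μ ≤ n − 1. Let X be a random variable with values in Fq^{n×m}, and for a subset I ⊆ {1,…,n} let X_I denote the submatrix of X consisting of the rows indexed by I. If H(X | X_I) = (n − μ)·m·log q for every subset I with |I| = μ, then X is uniformly distributed on Fq^{n×m}. -/

import Mathlib

set_option autoImplicit false

open Matrix MeasureTheory

/-- Shannon entropy (in nats) of a finitely-valued random variable. -/
noncomputable def entropy {Ω α : Type*} [Fintype α] [MeasurableSpace Ω]
    (P : Measure Ω) (X : Ω → α) : ℝ :=
  - ∑ a : α, (P {ω | X ω = a}).toReal * Real.log (P {ω | X ω = a}).toReal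

/-- Conditional entropy (in nats) `H(X|Y) = H(X,Y) - H(Y)`. -/
noncomputable def condEntropy {Ω α β : Type*} [Fintype α] [Fintype β] [MeasurableSpace Ω]
    (P : Measure Ω) (X : Ω → α) (Y : Ω → β) : ℝ :=
  entropy P (fun ω => (X ω, Y ω)) - entropy P Y

/-!
Let `f` restrict a matrix to the rows in `I`, let `p` be the law of `X` and `r a = P(f X = a)`.
As `(X, f X)` determines `X`, `H(X | f X) = H(X) - H(f X)`, which splits over the fibres of `f`
as `∑ₐ (∑_{f x = a} η (p x) - η (r a))` with `η t = -t log t`. Every fibre has `K = q^{m(n-μ)}`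
points, so Jensen's inequality for the strictly concave `η` bounds the `a`-th term by
`r a · log K`, with equality iff `p` is constant on the fibre. The hypothesis therefore makes `p`
constant on the fibres of every such `f`. As `μ ≤ n - 1`, every row avoids some `I`, so `p` is
unchanged when a single row is altered; hence it is constant, i.e. uniform.
-/

open Finset Real

namespace Real

lemma card_mul_negMulLog_div_card {ι : Type*} {S : Finset ι} (hS : S.Nonempty) (s : ℝ) :
    #S * negMulLog (s / #S) = negMulLog s + s * log #S := by
  have hk : (0 : ℝ) < #S := by exact_mod_cast hS.card_pos
  rw [div_eq_mul_inv, negMulLog_mul, negMulLog, negMulLog, log_inv]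
  field_simp

lemma sum_negMulLog_le {ι : Type*} (S : Finset ι) {p : ι → ℝ} (hp : ∀ x ∈ S, 0 ≤ p x) :
    ∑ x ∈ S, negMulLog (p x) ≤ negMulLog (∑ x ∈ S, p x) + (∑ x ∈ S, p x) * log #S := by
  rcases S.eq_empty_or_nonempty with rfl | hS
  · simp
  have hk : (0 : ℝ) < #S := by exact_mod_cast hS.card_pos
  have jensen := concaveOn_negMulLog.le_map_sum (t := S) (w := fun _ => (#S : ℝ)⁻¹)
    (fun _ _ => by positivity) (by simp [hk.ne']) hp
  simp only [smul_eq_mul, ← div_eq_inv_mul, ← sum_div] at jensen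
  rwa [← card_mul_negMulLog_div_card hS, ← div_le_iff₀' hk]

lemma sum_negMulLog_eq_iff {ι : Type*} (S : Finset ι) {p : ι → ℝ} (hp : ∀ x ∈ S, 0 ≤ p x) :
    ∑ x ∈ S, negMulLog (p x) = negMulLog (∑ x ∈ S, p x) + (∑ x ∈ S, p x) * log #S ↔
      ∀ x ∈ S, ∀ y ∈ S, p x = p y := by
  rcases S.eq_empty_or_nonempty with rfl | hS
  · simp
  have hk : (0 : ℝ) < #S := by exact_mod_cast hS.card_pos
  have jensen := strictConcaveOn_negMulLog.map_sum_eq_iff_of_pos (t := S)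
    (w := fun _ => (#S : ℝ)⁻¹) (fun _ _ => by positivity) (by simp [hk.ne']) hp
  simp only [smul_eq_mul, ← div_eq_inv_mul, ← sum_div] at jensen
  rw [← card_mul_negMulLog_div_card hS, ← jensen, eq_div_iff hk.ne', mul_comm, eq_comm]

lemma sum_negMulLog_fiberwise_eq_iff {α β : Type*} [Fintype α] [Fintype β] [DecidableEq β]
    (f : α → β) {K : ℕ} (hK : ∀ b, #{x | f x = b} = K) {p : α → ℝ} (hp : ∀ x, 0 ≤ p x) :
    ∑ x, negMulLog (p x) = ∑ b, negMulLog (∑ x with f x = b, p x) + (∑ x, p x) * log K ↔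
      ∀ x y, f x = f y → p x = p y := by
  have hle : ∀ b ∈ (univ : Finset β), ∑ x with f x = b, negMulLog (p x) ≤
      negMulLog (∑ x with f x = b, p x) + (∑ x with f x = b, p x) * log K := fun b _ =>
    hK b ▸ sum_negMulLog_le _ fun x _ => hp x
  rw [← sum_fiberwise univ f, ← sum_fiberwise univ f p, sum_mul, ← sum_add_distrib,
    sum_eq_sum_iff_of_le hle]
  refine ⟨fun h x y hxy => ?_, fun h b _ => ?_⟩
  · have hx : x ∈ ({z | f z = f x} : Finset α) := by simp
    have hy : y ∈ ({z | f z = f x} : Finset α) := by simp [hxy]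
    exact (sum_negMulLog_eq_iff _ fun x _ => hp x).1 (hK (f x) ▸ h (f x) (mem_univ _)) x hx y hy
  · rw [← hK b]
    exact (sum_negMulLog_eq_iff _ fun x _ => hp x).2 fun x hx y hy => h x y (by simp_all)

end Real

section Entropy

variable {Ω α β : Type*} [MeasurableSpace Ω] (P : Measure Ω) [Fintype α]

lemma entropy_eq_sum_negMulLog (X : Ω → α) :
    entropy P X = ∑ a, negMulLog (P {ω | X ω = a}).toReal := by
  simp only [entropy, negMulLog, neg_mul, sum_neg_distrib]

lemma entropy_comp_of_injective [Fintype β] (X : Ω → α) {g : α → β} (hg : Function.Injective g) :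
    entropy P (g ∘ X) = entropy P X := by
  classical
  simp only [entropy_eq_sum_negMulLog]
  refine (sum_of_injOn g hg.injOn (by simp) (fun b _ hb => ?_) fun a _ => ?_).symm
  · have : {ω | g (X ω) = b} = ∅ := Set.eq_empty_of_forall_notMem fun ω hω =>
      hb ⟨X ω, mem_coe.2 (mem_univ _), hω⟩
    simp [this]
  · simp [hg.eq_iff]

lemma condEntropy_comp [Fintype β] (X : Ω → α) (f : α → β) :
    condEntropy P X (f ∘ X) = entropy P X - entropy P (f ∘ X) := by
  rw [condEntropy, ← entropy_comp_of_injective P X (g := fun a => (a, f a))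
    fun _ _ h => (Prod.ext_iff.1 h).1]
  rfl

variable [Countable Ω] [MeasurableSingletonClass Ω]

lemma sum_measure_eq_one [IsProbabilityMeasure P] (X : Ω → α) :
    ∑ a, P {ω | X ω = a} = 1 := by
  have := sum_measure_preimage_singleton (μ := P) univ (f := X)
    fun _ _ => MeasurableSet.of_discrete
  rwa [coe_univ, Set.preimage_univ, measure_univ] at this

lemma toReal_measure_comp_eq_sum [IsFiniteMeasure P] [DecidableEq β] (X : Ω → α) (f : α → β)
    (b : β) : (P {ω | f (X ω) = b}).toReal = ∑ a with f a = b, (P {ω | X ω = a}).toReal := by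
  have hfiber : {ω | f (X ω) = b} = X ⁻¹' ({a | f a = b} : Finset α) := by ext; simp
  rw [hfiber, ← sum_measure_preimage_singleton _ fun _ _ => MeasurableSet.of_discrete,
    ENNReal.toReal_sum fun _ _ => measure_ne_top P _]
  rfl

lemma measure_eq_of_condEntropy_comp_eq_log [IsProbabilityMeasure P] [Fintype β] [DecidableEq β]
    (X : Ω → α) (f : α → β) {K : ℕ} (hK : ∀ b, #{a | f a = b} = K)
    (h : condEntropy P X (f ∘ X) = log K) {x y : α} (hxy : f x = f y) :
    P {ω | X ω = x} = P {ω | X ω = y} := by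
  have hsum : ∑ a, (P {ω | X ω = a}).toReal = 1 := by
    rw [← ENNReal.toReal_sum fun _ _ => measure_ne_top P _, sum_measure_eq_one, ENNReal.toReal_one]
  rw [condEntropy_comp, entropy_eq_sum_negMulLog, entropy_eq_sum_negMulLog] at h
  simp only [Function.comp_apply, toReal_measure_comp_eq_sum] at h
  have hconst := (sum_negMulLog_fiberwise_eq_iff f hK fun _ => ENNReal.toReal_nonneg).1
    (by rw [hsum, one_mul, ← h]; ring) x y hxy
  exact (ENNReal.toReal_eq_toReal_iff' (measure_ne_top P _) (measure_ne_top P _)).1 hconst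

lemma measure_eq_inv_card_of_forall_eq [IsProbabilityMeasure P] (X : Ω → α)
    (h : ∀ x y, P {ω | X ω = x} = P {ω | X ω = y}) (x : α) :
    P {ω | X ω = x} = (Fintype.card α : ENNReal)⁻¹ := by
  have hsum := sum_measure_eq_one P X
  simp only [h _ x, sum_const, card_univ, nsmul_eq_mul] at hsum
  exact ENNReal.eq_inv_of_mul_eq_one_left (by rwa [mul_comm])

end Entropy

lemma card_filter_restrict_eq {ι γ : Type*} [Fintype ι] [DecidableEq ι] [Fintype γ]
    [DecidableEq γ] (s : Finset ι) (a : s → γ) :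
    #{x : ι → γ | (fun i : s => x i) = a} = Fintype.card γ ^ (Fintype.card ι - #s) := by
  rw [← Fintype.card_subtype]
  calc Fintype.card {x : ι → γ // (fun i : s => x i) = a}
      = Fintype.card {y : (s → γ) × ({i // i ∉ s} → γ) // y.1 = a} :=
        Fintype.card_congr
          ((Equiv.piEquivPiSubtypeProd (· ∈ s) fun _ => γ).subtypeEquiv fun _ => Iff.rfl)
    _ = Fintype.card γ ^ (Fintype.card ι - #s) := by
        rw [Fintype.card_congr (Equiv.prodSubtypeFstEquivSubtypeProd (p := (· = a)))]
        simp [Fintype.card_subtype_compl]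

lemma eq_of_forall_update_eq {ι γ R : Type*} [Fintype ι] [DecidableEq ι] {g : (ι → γ) → R}
    (hg : ∀ x i c, g (Function.update x i c) = g x) (x y : ι → γ) : g x = g y := by
  suffices ∀ s : Finset ι, g (s.piecewise y x) = g x by simpa using (this univ).symm
  intro s
  induction s using Finset.induction_on with
  | empty => simp
  | insert j s _ ih => rw [piecewise_insert, hg, ih]

theorem uniform_of_condEntropy_all_row_subsets_general
    (q : ℕ) (n m : ℕ)
    (μ : ℕ) (hμn : μ ≤ n - 1)
    (F : Type) [Fintype F] (hF : Fintype.card F = q)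
    (Ω : Type) [Fintype Ω] [MeasurableSpace Ω] [MeasurableSingletonClass Ω]
    (P : Measure Ω) [IsProbabilityMeasure P]
    (X : Ω → Matrix (Fin n) (Fin m) F)
    (hcond : ∀ I : Finset (Fin n), I.card = μ →
      condEntropy P X (fun ω => fun (i : I) (j : Fin m) => X ω i j) =
        ((n - μ : ℕ) : ℝ) * (m * Real.log q)) :
    ∀ x : Matrix (Fin n) (Fin m) F,
      P {ω | X ω = x} = ((Fintype.card (Matrix (Fin n) (Fin m) F) : ENNReal))⁻¹ := by
  classical
  have hrows : ∀ I : Finset (Fin n), #I = μ → ∀ x y : Matrix (Fin n) (Fin m) F,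
      (∀ i ∈ I, x i = y i) → P {ω | X ω = x} = P {ω | X ω = y} := by
    intro I hI x y hxy
    refine measure_eq_of_condEntropy_comp_eq_log P X (fun x (i : I) => x i)
      (card_filter_restrict_eq I) ?_ (funext fun i => hxy i i.2)
    exact (hcond I hI).trans (by simp [hF, hI, Real.log_pow])
  have hupdate : ∀ (x : Matrix (Fin n) (Fin m) F) j c,
      P {ω | X ω = Function.update x j c} = P {ω | X ω = x} := by
    intro x j c
    obtain ⟨I, hIj, hI⟩ := exists_subset_card_eq (s := univ.erase j) (by simpa using hμn)
    exact hrows I hI _ _ fun i hi => Function.update_of_ne (ne_of_mem_erase (hIj hi)) c x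
  exact measure_eq_inv_card_of_forall_eq P X (eq_of_forall_update_eq hupdate)

/-- If `H(X | X_I) = (n - μ)·m·log q` for every subset `I` of rows with `|I| = μ`,
then `X` is uniformly distributed on `F^{n×m}`. -/
theorem uniform_of_condEntropy_all_row_subsets
    (q : ℕ) (hq : IsPrimePow q) (n m : ℕ) (hn : 0 < n) (hm : 0 < m)
    (μ : ℕ) (hμ1 : 1 ≤ μ) (hμn : μ ≤ n - 1)
    (F : Type) [Field F] [Fintype F] (hF : Fintype.card F = q)
    (Ω : Type) [Fintype Ω] [MeasurableSpace Ω] [MeasurableSingletonClass Ω]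
    (P : Measure Ω) [IsProbabilityMeasure P]
    (X : Ω → Matrix (Fin n) (Fin m) F)
    (hcond : ∀ I : Finset (Fin n), I.card = μ →
      condEntropy P X (fun ω => fun (i : I) (j : Fin m) => X ω i j) =
        ((n - μ : ℕ) : ℝ) * (m * Real.log q)) :
    ∀ x : Matrix (Fin n) (Fin m) F,
      P {ω | X ω = x} = ((Fintype.card (Matrix (Fin n) (Fin m) F) : ENNReal))⁻¹ :=
  uniform_of_condEntropy_all_row_subsets_general q n m μ hμn F hF Ω P X hcond
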